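/- Let φ = μφ₀ ∘ L where L is a linear operator on a Hilbert space H and φ₀ is closed proper convex, and let α > 0, Y ∈ H. If P* is a minimizer of P ↦ (μφ₀)*(-P) + ⟨(α/2)L(Lᵀ(P)) + L(Y), P⟩, then prox_{αφ}(Y) = Y + α Lᵀ(P*). -/

import Mathlib

/-! Write `g = μφ₀`, `W = Lᵀ P*` and `v = L (Y + α W)`, the gradient at `P*` of the quadratic part
of the dual objective `g*(-P) + q(P)`. Minimality of `P*`, together with convexity of `g*`,
gives the subgradient inequality `g*(x) ≥ g*(-P*) + ⟪v, x + P*⟫`. By Fenchel–Moreau (`g ≤ g**`,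
proved by separating points from the closed convex epigraph of `g` in `H × ℝ`) this yields
`g v ≤ -g*(-P*) - ⟪v, P*⟫`, while Fenchel–Young gives `g (L U) ≥ -⟪U, W⟫ - g*(-P*)`. The primal
objective at `U` therefore exceeds its value at `Y + α W` by at least `‖U - Y - α W‖² / (2α)`. -/

noncomputable section
open scoped RealInnerProductSpace

variable {H : Type*} [NormedAddCommGroup H] [InnerProductSpace ℝ H] [FiniteDimensional ℝ H]

/-- Convexity for extended-real-valued functions. -/
def ConvexE (g : H → EReal) : Prop :=
  ∀ x y : H, ∀ a b : ℝ, 0 ≤ a → 0 ≤ b → a + b = 1 →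
    g (a • x + b • y) ≤ (a : EReal) * g x + (b : EReal) * g y

/-- Properness: somewhere finite, nowhere `-∞`. -/
def ProperE (g : H → EReal) : Prop := (∃ x, g x ≠ ⊤) ∧ ∀ x, g x ≠ ⊥

/-- Fenchel (convex) conjugate: `g*(x) = sup_y (⟨y, x⟩ - g y)`. -/
def conjE (g : H → EReal) (x : H) : EReal := ⨆ y : H, ((⟪y, x⟫ : ℝ) : EReal) - g y

set_option linter.unusedSectionVars false

open Filter Topology

/-- The epigraph of `g` cut down to real heights: a subset of the vector space `H × ℝ`, where
Hahn–Banach separation applies. -/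
def realEpigraph (g : H → EReal) : Set (H × ℝ) := {q | g q.1 ≤ q.2}

section Conjugate

variable {g : H → EReal}

theorem inner_sub_le_conjE (g : H → EReal) (x p : H) : (⟪x, p⟫ : EReal) - g x ≤ conjE g p :=
  le_iSup (fun y : H => ((⟪y, p⟫ : ℝ) : EReal) - g y) x

theorem EReal.coe_sub_le_coe_iff_coe_sub_le (a c : ℝ) (X : EReal) :
    (a : EReal) - X ≤ c ↔ ((a - c : ℝ) : EReal) ≤ X := by
  induction X using EReal.rec with
  | bot => simpa using EReal.coe_ne_bot (a - c)
  | top => simp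
  | coe r => norm_cast; constructor <;> intro h <;> linarith

theorem conjE_le_coe_iff {p : H} {c : ℝ} :
    conjE g p ≤ c ↔ ∀ y, ((⟪y, p⟫ - c : ℝ) : EReal) ≤ g y := by
  simp only [conjE, iSup_le_iff, EReal.coe_sub_le_coe_iff_coe_sub_le]

theorem conjE_ne_bot (hg : ∃ x, g x ≠ ⊤) (p : H) : conjE g p ≠ ⊥ := by
  obtain ⟨x, hx⟩ := hg
  refine ne_bot_of_le_ne_bot ?_ (inner_sub_le_conjE g x p)
  induction hgx : g x using EReal.rec with
  | bot => simp
  | top => exact absurd hgx hx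
  | coe r => exact_mod_cast EReal.coe_ne_bot (⟪x, p⟫ - r)

theorem conjE_convex_comb_le {x y : H} {cx cy : ℝ} (hx : conjE g x ≤ cx) (hy : conjE g y ≤ cy)
    {a b : ℝ} (ha : 0 ≤ a) (hb : 0 ≤ b) (hab : a + b = 1) :
    conjE g (a • x + b • y) ≤ ((a * cx + b * cy : ℝ) : EReal) := by
  rw [conjE_le_coe_iff] at hx hy ⊢
  intro z
  have hxz := hx z
  have hyz := hy z
  induction hz : g z using EReal.rec with
  | bot =>
    rw [hz, le_bot_iff] at hxz
    exact absurd hxz (EReal.coe_ne_bot _)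
  | top => exact le_top
  | coe r =>
    rw [hz, EReal.coe_le_coe_iff] at hxz hyz
    rw [EReal.coe_le_coe_iff, inner_add_right, real_inner_smul_right, real_inner_smul_right]
    have hr : r = a * r + b * r := by rw [← add_mul, hab, one_mul]
    linarith [mul_le_mul_of_nonneg_left hxz ha, mul_le_mul_of_nonneg_left hyz hb]

end Conjugate

section Separation

variable {g : H → EReal}

theorem ConvexE.convex_realEpigraph (hg : ConvexE g) : Convex ℝ (realEpigraph g) := by
  rintro ⟨x, s⟩ hx ⟨y, t⟩ hy a b ha hb hab
  change g (a • x + b • y) ≤ ((a * s + b * t : ℝ) : EReal)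
  calc g (a • x + b • y) ≤ (a : EReal) * g x + (b : EReal) * g y := hg x y a b ha hb hab
    _ ≤ (a : EReal) * s + (b : EReal) * t :=
      add_le_add (mul_le_mul_of_nonneg_left hx (by exact_mod_cast ha))
        (mul_le_mul_of_nonneg_left hy (by exact_mod_cast hb))
    _ = ((a * s + b * t : ℝ) : EReal) := by norm_cast

theorem LowerSemicontinuous.isClosed_realEpigraph (hg : LowerSemicontinuous g) :
    IsClosed (realEpigraph g) :=
  hg.isClosed_epigraph.preimage
    (continuous_fst.prodMk (continuous_coe_real_ereal.comp continuous_snd))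

theorem exists_inner_add_mul_eq (f : (H × ℝ) →L[ℝ] ℝ) :
    ∃ (p : H) (s : ℝ), ∀ x t, f (x, t) = ⟪x, p⟫ + t * s := by
  refine ⟨(InnerProductSpace.toDual ℝ H).symm (f.comp (.inl ℝ H ℝ)), f (0, 1), fun x t => ?_⟩
  have hsplit : ((x, t) : H × ℝ) = (x, 0) + t • ((0 : H), (1 : ℝ)) := by simp
  rw [hsplit, map_add, map_smul, real_inner_comm, InnerProductSpace.toDual_symm_apply]
  rfl

theorem exists_separation_realEpigraph (hcvx : Convex ℝ (realEpigraph g))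
    (hcl : IsClosed (realEpigraph g)) {x₀ : H} {c : ℝ} (hc : (c : EReal) < g x₀) :
    ∃ (p : H) (s u : ℝ), ⟪x₀, p⟫ + c * s < u ∧
      ∀ y (t : ℝ), g y ≤ t → u < ⟪y, p⟫ + t * s := by
  obtain ⟨f, u, hfx₀, hf⟩ := geometric_hahn_banach_point_closed hcvx hcl
    (show (x₀, c) ∉ realEpigraph g from hc.not_ge)
  obtain ⟨p, s, hfps⟩ := exists_inner_add_mul_eq f
  refine ⟨p, s, u, hfps x₀ c ▸ hfx₀, fun y t hyt => hfps y t ▸ hf (y, t) hyt⟩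

variable {p : H} {s u : ℝ}

theorem slope_nonneg_of_separation (hsep : ∀ y (t : ℝ), g y ≤ t → u < ⟪y, p⟫ + t * s) {y : H}
    (hy : g y ≠ ⊤) : 0 ≤ s := by
  by_contra! hs
  obtain ⟨r, hr, -⟩ := EReal.exists_between_coe_real hy.lt_top
  have hdown : Tendsto (fun t => ⟪y, p⟫ + t * s) atTop atBot :=
    tendsto_atBot_add_const_left _ _ (tendsto_id.atTop_mul_const_of_neg hs)
  obtain ⟨t, hrt, hts⟩ := ((eventually_ge_atTop r).and (hdown.eventually_le_atBot u)).exists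
  exact (hsep y t (hr.le.trans (by exact_mod_cast hrt))).not_ge hts

theorem exists_minorant_gt_of_slope_pos (hsep : ∀ y (t : ℝ), g y ≤ t → u < ⟪y, p⟫ + t * s)
    (hbot : ∀ y, g y ≠ ⊥) (hs : 0 < s) {x₀ : H} {c : ℝ} (hx₀ : ⟪x₀, p⟫ + c * s < u) :
    ∃ (q : H) (b : ℝ), (∀ y, ((⟪y, q⟫ - b : ℝ) : EReal) ≤ g y) ∧ c < ⟪x₀, q⟫ - b := by
  have hval : ∀ y, ⟪y, -s⁻¹ • p⟫ - (-u / s) = (u - ⟪y, p⟫) / s := fun y => by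
    rw [real_inner_smul_right]; field_simp; ring
  refine ⟨-s⁻¹ • p, -u / s, fun y => ?_, ?_⟩
  · rcases eq_or_ne (g y) ⊤ with hy | hy
    · simp [hy]
    rw [← EReal.coe_toReal hy (hbot y), EReal.coe_le_coe_iff, hval, div_le_iff₀ hs]
    linarith [hsep y _ (EReal.coe_toReal hy (hbot y)).ge]
  · rw [hval, lt_div_iff₀ hs]
    linarith

end Separation

section Minorant

variable {g : H → EReal}

/- A vertical separating hyperplane gives no minorant by itself; tilting a given minorant by a
large multiple of it does. -/
theorem exists_minorant_gt_of_vertical {q₀ : H} {b₀ : ℝ}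
    (hq₀ : ∀ y, ((⟪y, q₀⟫ - b₀ : ℝ) : EReal) ≤ g y) {p : H} {u : ℝ}
    (hdom : ∀ y, g y ≠ ⊤ → u < ⟪y, p⟫) {x₀ : H} (hx₀ : ⟪x₀, p⟫ < u) (c : ℝ) :
    ∃ (q : H) (b : ℝ), (∀ y, ((⟪y, q⟫ - b : ℝ) : EReal) ≤ g y) ∧ c < ⟪x₀, q⟫ - b := by
  obtain ⟨n, hn⟩ := exists_nat_gt ((c - (⟪x₀, q₀⟫ - b₀)) / (u - ⟪x₀, p⟫))
  have hval : ∀ y, ⟪y, q₀ - (n : ℝ) • p⟫ - (b₀ - n * u) = ⟪y, q₀⟫ - b₀ + n * (u - ⟪y, p⟫) :=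
    fun y => by rw [inner_sub_right, real_inner_smul_right]; ring
  refine ⟨q₀ - (n : ℝ) • p, b₀ - n * u, fun y => ?_, ?_⟩
  · rcases eq_or_ne (g y) ⊤ with hy | hy
    · simp [hy]
    refine le_trans ?_ (hq₀ y)
    rw [hval, EReal.coe_le_coe_iff]
    nlinarith [hdom y hy, n.cast_nonneg (α := ℝ)]
  · rw [div_lt_iff₀ (by linarith)] at hn
    rw [hval]
    linarith

theorem exists_minorant_gt_of_ne_top (hbot : ∀ y, g y ≠ ⊥) (hcvx : Convex ℝ (realEpigraph g))
    (hcl : IsClosed (realEpigraph g)) {x₀ : H} (hx₀ : g x₀ ≠ ⊤) {c : ℝ} (hc : (c : EReal) < g x₀) :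
    ∃ (q : H) (b : ℝ), (∀ y, ((⟪y, q⟫ - b : ℝ) : EReal) ≤ g y) ∧ c < ⟪x₀, q⟫ - b := by
  obtain ⟨p, s, u, hx₀u, hsep⟩ := exists_separation_realEpigraph hcvx hcl hc
  obtain ⟨t, ht, -⟩ := EReal.exists_between_coe_real hx₀.lt_top
  have hs : s ≠ 0 := by
    rintro rfl
    linarith [hsep x₀ t ht.le]
  exact exists_minorant_gt_of_slope_pos hsep hbot
    ((slope_nonneg_of_separation hsep hx₀).lt_of_ne' hs) hx₀u

theorem exists_minorant (hg : ProperE g) (hcvx : Convex ℝ (realEpigraph g))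
    (hcl : IsClosed (realEpigraph g)) :
    ∃ (q : H) (b : ℝ), ∀ y, ((⟪y, q⟫ - b : ℝ) : EReal) ≤ g y := by
  obtain ⟨⟨x, hx⟩, hbot⟩ := hg
  obtain ⟨c, -, hc⟩ := EReal.exists_between_coe_real (hbot x).bot_lt
  obtain ⟨q, b, hqb, -⟩ := exists_minorant_gt_of_ne_top hbot hcvx hcl hx hc
  exact ⟨q, b, hqb⟩

theorem exists_minorant_gt (hg : ProperE g) (hcvx : Convex ℝ (realEpigraph g))
    (hcl : IsClosed (realEpigraph g)) {x₀ : H} {c : ℝ} (hc : (c : EReal) < g x₀) :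
    ∃ (q : H) (b : ℝ), (∀ y, ((⟪y, q⟫ - b : ℝ) : EReal) ≤ g y) ∧ c < ⟪x₀, q⟫ - b := by
  obtain ⟨p, s, u, hx₀u, hsep⟩ := exists_separation_realEpigraph hcvx hcl hc
  obtain ⟨x, hx⟩ := hg.1
  rcases (slope_nonneg_of_separation hsep hx).lt_or_eq with hs | rfl
  · exact exists_minorant_gt_of_slope_pos hsep hg.2 hs hx₀u
  · obtain ⟨q₀, b₀, hq₀⟩ := exists_minorant hg hcvx hcl
    refine exists_minorant_gt_of_vertical hq₀ (fun y hy => ?_) (by simpa using hx₀u) c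
    obtain ⟨r, hr, -⟩ := EReal.exists_between_coe_real hy.lt_top
    simpa using hsep y r hr.le

theorem le_conjE_conjE (hg : ProperE g) (hconv : ConvexE g) (hlsc : LowerSemicontinuous g)
    (x : H) : g x ≤ conjE (conjE g) x := by
  refine EReal.ge_of_forall_gt_iff_ge.mp fun c hc => ?_
  obtain ⟨q, b, hqb, hcx⟩ :=
    exists_minorant_gt hg hconv.convex_realEpigraph hlsc.isClosed_realEpigraph hc
  calc (c : EReal) ≤ ((⟪q, x⟫ - b : ℝ) : EReal) := by rw [real_inner_comm]; exact_mod_cast hcx.le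
    _ ≤ (⟪q, x⟫ : EReal) - conjE g q := by
      rw [EReal.coe_sub]; exact EReal.sub_le_sub le_rfl (conjE_le_coe_iff.mpr hqb)
    _ ≤ conjE (conjE g) x := inner_sub_le_conjE _ q x

end Minorant

theorem le_of_forall_le_add_mul {a b K : ℝ} (h : ∀ t, 0 < t → t ≤ 1 → a ≤ b + t * K) : a ≤ b := by
  have hcont : Continuous fun t : ℝ => b + t * K := by fun_prop
  have hlim : Tendsto (fun t => b + t * K) (𝓝[>] 0) (𝓝 b) :=
    (hcont.tendsto' 0 b (by simp)).mono_left nhdsWithin_le_nhds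
  exact ge_of_tendsto hlim (eventually_of_mem (Ioc_mem_nhdsGT one_pos) fun t ht => h t ht.1 ht.2)

/- Compare minimality at `P₀ + t • (-x - P₀)` with convexity of `g*` on the segment from `-P₀`
to `x`, divide by `t` and let `t → 0⁺`. -/
theorem le_conjE_of_isMin_conjE_neg_add {g : H → EReal} {q : H → ℝ} {P₀ v : H} {c : ℝ}
    (hc : conjE g (-P₀) = c) (hmin : ∀ P, conjE g (-P₀) + q P₀ ≤ conjE g (-P) + q P)
    (hq : ∀ Q, ∃ K, ∀ t, q (P₀ + t • Q) = q P₀ + t * ⟪v, Q⟫ + t ^ 2 * K) (x : H) :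
    ((c + ⟪v, x + P₀⟫ : ℝ) : EReal) ≤ conjE g x := by
  rcases eq_or_ne (conjE g x) ⊤ with hx | hx
  · simp [hx]
  have hdom : ∃ y, g y ≠ ⊤ := by
    by_contra! h
    simp [conjE, h] at hc
  set d := (conjE g x).toReal
  have hd : conjE g x = d := (EReal.coe_toReal hx (conjE_ne_bot hdom x)).symm
  rw [hd, EReal.coe_le_coe_iff]
  obtain ⟨K, hK⟩ := hq (-x - P₀)
  suffices hlim : ∀ t, 0 < t → t ≤ 1 → c ≤ d + ⟪v, -x - P₀⟫ + t * K by
    have := le_of_forall_le_add_mul hlim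
    rw [inner_sub_right, inner_neg_right] at this
    rw [inner_add_right]
    linarith
  intro t ht0 ht1
  have hseg : -(P₀ + t • (-x - P₀)) = (1 - t) • -P₀ + t • x := by module
  have hconv := conjE_convex_comb_le hc.le hd.le (sub_nonneg.2 ht1) ht0.le (by ring)
  rw [← hseg] at hconv
  have h := (hmin (P₀ + t • (-x - P₀))).trans (add_le_add hconv le_rfl)
  rw [hc, hK] at h
  norm_cast at h
  refine le_of_mul_le_mul_left ?_ ht0
  nlinarith

theorem conjE_neg_ne_top_of_isMin_add {g : H → EReal} {q : H → ℝ} {P₀ p : H}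
    (hp : conjE g p ≠ ⊤) (hmin : ∀ P, conjE g (-P₀) + q P₀ ≤ conjE g (-P) + q P) :
    conjE g (-P₀) ≠ ⊤ := by
  have h := ne_top_of_le_ne_top (EReal.add_ne_top (by rwa [neg_neg]) (EReal.coe_ne_top _))
    (hmin (-p))
  exact (EReal.add_ne_top_iff_ne_top_left (EReal.coe_ne_bot _) (EReal.coe_ne_top _)).mp h

open ContinuousLinearMap in
theorem inner_half_smul_map_adjoint_add_smul (L : H →L[ℝ] H) (α : ℝ) (Y P Q : H) (t : ℝ) :
    ⟪(α / 2) • L (adjoint L (P + t • Q)) + L Y, P + t • Q⟫ =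
      ⟪(α / 2) • L (adjoint L P) + L Y, P⟫ + t * ⟪L (Y + α • adjoint L P), Q⟫ +
        t ^ 2 * (α / 2 * ‖adjoint L Q‖ ^ 2) := by
  simp only [← adjoint_inner_right, map_add, map_smul, inner_add_left, inner_add_right,
    real_inner_smul_left, real_inner_smul_right, ← real_inner_self_eq_norm_sq,
    real_inner_comm (adjoint L P) (adjoint L Q)]
  ring

theorem isMinOn_inner_neg_add_norm_sub_sq {α : ℝ} (hα : 0 < α) (Y W : H) :
    IsMinOn (fun U => ⟪U, -W⟫ + 1 / (2 * α) * ‖U - Y‖ ^ 2) Set.univ (Y + α • W) := by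
  refine isMinOn_univ_iff.mpr fun U => ?_
  have hgap : ⟪U, -W⟫ + 1 / (2 * α) * ‖U - Y‖ ^ 2 =
      ⟪Y + α • W, -W⟫ + 1 / (2 * α) * ‖(Y + α • W) - Y‖ ^ 2 +
        1 / (2 * α) * ‖U - Y - α • W‖ ^ 2 := by
    rw [add_sub_cancel_left, norm_sub_sq_real (U - Y), norm_smul, Real.norm_of_nonneg hα.le]
    simp only [inner_neg_right, inner_add_left, inner_sub_left, real_inner_smul_left,
      real_inner_smul_right, real_inner_self_eq_norm_sq]
    field_simp
    ring
  rw [hgap]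
  exact le_add_of_nonneg_right (by positivity)

section ConstMul

variable {g : H → EReal} {μ : ℝ}

theorem ProperE.const_mul (hg : ProperE g) (hμ : 0 < μ) : ProperE fun x => (μ : EReal) * g x := by
  have hμ' : (0 : EReal) < μ := by exact_mod_cast hμ
  obtain ⟨⟨x, hx⟩, hbot⟩ := hg
  refine ⟨⟨x, ?_⟩, fun y => ?_⟩
  · simp [EReal.mul_eq_top, hx, hμ'.not_gt, EReal.coe_ne_bot]
  · simp [EReal.mul_eq_bot, hbot y, hμ'.not_gt, EReal.coe_ne_top]

theorem ConvexE.const_mul (hg : ConvexE g) (hμ : 0 ≤ μ) : ConvexE fun x => (μ : EReal) * g x := by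
  intro x y a b ha hb hab
  have hμ' : (0 : EReal) ≤ μ := by exact_mod_cast hμ
  calc (μ : EReal) * g (a • x + b • y) ≤ μ * ((a : EReal) * g x + (b : EReal) * g y) :=
        mul_le_mul_of_nonneg_left (hg x y a b ha hb hab) hμ'
    _ = a * (μ * g x) + b * (μ * g y) := by
        rw [EReal.left_distrib_of_nonneg_of_ne_top hμ' (EReal.coe_ne_top μ), mul_left_comm,
          mul_left_comm (μ : EReal)]

theorem LowerSemicontinuous.const_mul_ereal (hg : LowerSemicontinuous g) (hμ : 0 < μ) :
    LowerSemicontinuous fun x => (μ : EReal) * g x := by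
  have hμ' : (μ : EReal) ≠ 0 := by exact_mod_cast hμ.ne'
  have hcont : Continuous fun z : EReal => (μ : EReal) * z :=
    continuous_iff_continuousAt.mpr fun z => (EReal.continuousAt_mul (.inl hμ') (.inl hμ')
      (.inl (EReal.coe_ne_bot μ)) (.inl (EReal.coe_ne_top μ))).comp
        (continuous_const.prodMk continuous_id).continuousAt
  exact hcont.comp_lowerSemicontinuous hg fun a b hab =>
    mul_le_mul_of_nonneg_left hab (by exact_mod_cast hμ.le)

end ConstMul

open ContinuousLinearMap in
theorem prox_le_of_isMin_dual (L : H →L[ℝ] H) {g : H → EReal} (hg : ProperE g)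
    (hconv : ConvexE g) (hlsc : LowerSemicontinuous g) {α : ℝ} (hα : 0 < α) (Y Pstar : H)
    (hP : ∀ P : H,
      conjE g (-Pstar) + ((⟪(α / 2) • L (adjoint L Pstar) + L Y, Pstar⟫ : ℝ) : EReal) ≤
        conjE g (-P) + ((⟪(α / 2) • L (adjoint L P) + L Y, P⟫ : ℝ) : EReal)) (U : H) :
    g (L (Y + α • adjoint L Pstar)) +
        ((1 / (2 * α) * ‖(Y + α • adjoint L Pstar) - Y‖ ^ 2 : ℝ) : EReal) ≤
      g (L U) + ((1 / (2 * α) * ‖U - Y‖ ^ 2 : ℝ) : EReal) := by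
  set W := adjoint L Pstar
  set v := L (Y + α • W)
  let q : H → ℝ := fun P => ⟪(α / 2) • L (adjoint L P) + L Y, P⟫
  obtain ⟨p, b, hpb⟩ := exists_minorant hg hconv.convex_realEpigraph hlsc.isClosed_realEpigraph
  have hne_top : conjE g (-Pstar) ≠ ⊤ := conjE_neg_ne_top_of_isMin_add (q := q)
    (ne_top_of_le_ne_top (EReal.coe_ne_top b) (conjE_le_coe_iff.mpr hpb)) hP
  set c := (conjE g (-Pstar)).toReal
  have hc : conjE g (-Pstar) = c := (EReal.coe_toReal hne_top (conjE_ne_bot hg.1 _)).symm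
  have hsub : ∀ x, ((c + ⟪v, x + Pstar⟫ : ℝ) : EReal) ≤ conjE g x :=
    le_conjE_of_isMin_conjE_neg_add (q := q) hc hP
      fun Q => ⟨_, inner_half_smul_map_adjoint_add_smul L α Y Pstar Q⟩
  have hgv : g v ≤ ((-c - ⟪v, Pstar⟫ : ℝ) : EReal) :=
    (le_conjE_conjE hg hconv hlsc v).trans <| conjE_le_coe_iff.mpr fun x => by
      convert hsub x using 2
      rw [inner_add_right, real_inner_comm]
      ring
  have hgU : ((⟪L U, -Pstar⟫ - c : ℝ) : EReal) ≤ g (L U) := conjE_le_coe_iff.mp hc.le (L U)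
  have hquad := isMinOn_univ_iff.mp (isMinOn_inner_neg_add_norm_sub_sq hα Y W) U
  rw [inner_neg_right, ← adjoint_inner_right] at hgU
  rw [inner_neg_right, inner_neg_right] at hquad
  have hvP : ⟪v, Pstar⟫ = ⟪Y + α • W, W⟫ := (adjoint_inner_right L _ _).symm
  calc g v + ((1 / (2 * α) * ‖(Y + α • W) - Y‖ ^ 2 : ℝ) : EReal)
      ≤ ((-c - ⟪v, Pstar⟫ : ℝ) : EReal) + ((1 / (2 * α) * ‖(Y + α • W) - Y‖ ^ 2 : ℝ) : EReal) :=
        add_le_add hgv le_rfl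
    _ ≤ ((-⟪U, W⟫ - c : ℝ) : EReal) + ((1 / (2 * α) * ‖U - Y‖ ^ 2 : ℝ) : EReal) := by
        norm_cast; linarith
    _ ≤ g (L U) + ((1 / (2 * α) * ‖U - Y‖ ^ 2 : ℝ) : EReal) := add_le_add hgU le_rfl

/-- Let `φ = μφ₀ ∘ L` with `L` linear and `φ₀` closed proper convex, `α > 0`, `Y ∈ H`.
If `P*` minimizes `P ↦ (μφ₀)*(-P) + ⟨(α/2) L(Lᵀ P) + L Y, P⟩`, then
`prox_{αφ}(Y) = Y + α Lᵀ(P*)`, i.e. `Y + α Lᵀ(P*)` minimizes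
`U ↦ μφ₀(L U) + (1/(2α))‖U - Y‖²`. -/
theorem prox_via_dual (L : H →L[ℝ] H) (μ : ℝ) (hμ : 0 < μ) (φ₀ : H → EReal)
    (hconv : ConvexE φ₀) (hproper : ProperE φ₀) (hlsc : LowerSemicontinuous φ₀)
    (α : ℝ) (hα : 0 < α) (Y Pstar : H)
    (hP : ∀ P : H,
      conjE (fun z => (μ : EReal) * φ₀ z) (-Pstar) +
          ((⟪(α / 2) • L (ContinuousLinearMap.adjoint L Pstar) + L Y, Pstar⟫ : ℝ) : EReal) ≤
        conjE (fun z => (μ : EReal) * φ₀ z) (-P) +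
          ((⟪(α / 2) • L (ContinuousLinearMap.adjoint L P) + L Y, P⟫ : ℝ) : EReal)) :
    ∀ U : H,
      (μ : EReal) * φ₀ (L (Y + α • ContinuousLinearMap.adjoint L Pstar)) +
          (((1 / (2 * α)) * ‖(Y + α • ContinuousLinearMap.adjoint L Pstar) - Y‖ ^ 2 : ℝ) :
            EReal) ≤
        (μ : EReal) * φ₀ (L U) + (((1 / (2 * α)) * ‖U - Y‖ ^ 2 : ℝ) : EReal) :=
  prox_le_of_isMin_dual L (hproper.const_mul hμ) (hconv.const_mul hμ.le)
    (hlsc.const_mul_ereal hμ) hα Y Pstar hP
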